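/- Let η = (K1, K2, K3, K4, κ3, κ6, κ9, κ12) be a tuple of positive real parameters with a(η) > 0 and b(η) < 0. If −b(η) ≤ 4·(K1·K4·κ6·κ9·a(η))^{1/2} + 2·(K2·K3·κ3·κ12·a(η))^{1/2} + 3·(K1·K2·K3·K4·κ3·κ6^2·κ9^2·κ12)^{1/3}·(K2^{−1}·(K2·K4)^{1/3} + K3^{−1}·(K1·K3)^{1/3}), then p_{η,H}(x1,x3) ≥ 0 for all x1 > 0, x3 > 0. -/

import Mathlib

/-! `x1² x3` is the only monomial of `p_{η,H}` whose coefficient can be negative. It is the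
barycentre of five circuits of monomials with positive coefficients: `{x1⁴x3², 1}`,
`{x1²x3², x1²}`, `{x1³x3², x1}`, `{x1³x3, x1³x3, x3}` and `{x1⁴x3, x1x3, x1x3}`. Splitting the
positive part of `p_{η,H}` among these circuits and applying AM-GM to each bounds it below by
the right-hand side of the hypothesis times `x1² x3`, which absorbs the negative term. -/

/-- The bivariate polynomial `p_{η,H}` supported on the hexagonal face `H`. -/
def pEtaH (K1 K2 K3 K4 κ3 κ6 κ9 κ12 x1 x3 : ℝ) : ℝ :=
  K2 * κ3 * (κ3 * κ12 - κ6 * κ9) *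
      (K2 * K4 * κ3 * κ9 * x1 ^ 4 * x3 ^ 2 + K1 * K3 * κ6 * κ12 * x1 ^ 2 * x3 ^ 2
        + K2 * K3 * κ3 * κ12 * x1 ^ 3 * x3 ^ 2)
    + K1 * K2 * K3 * κ3 * κ6 * κ12 * ((K2 + K3) * κ3 * κ12 - (K1 + K4) * κ6 * κ9)
        * x1 ^ 2 * x3
    + K1 * κ6 *
        (K2 ^ 2 * K4 * κ3 ^ 2 * κ9 ^ 2 * x1 ^ 4 * x3
          + 2 * K2 * K3 * K4 * κ3 ^ 2 * κ9 * κ12 * x1 ^ 3 * x3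
          + K1 * K2 * K3 * K4 * κ3 * κ6 * κ9 * κ12 * x1 ^ 2
          + 2 * K1 * K2 * K3 * κ3 * κ6 * κ12 ^ 2 * x1 * x3
          + K1 * K2 * K3 ^ 2 * κ3 * κ6 * κ12 ^ 2 * x1
          + K1 * K3 ^ 2 * κ6 ^ 2 * κ12 ^ 2 * x3
          + K1 ^ 2 * K3 ^ 2 * κ6 ^ 2 * κ12 ^ 2)

theorem three_mul_le_add_add_of_pow_three_le_mul {R : Type*} [CommRing R] [LinearOrder R]
    [IsStrictOrderedRing R] {x y z m : R} (hx : 0 ≤ x) (hy : 0 ≤ y) (hz : 0 ≤ z)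
    (h : m ^ 3 ≤ x * y * z) : 3 * m ≤ x + y + z := by
  refine le_of_pow_le_pow_left₀ three_ne_zero (by positivity) ?_
  nlinarith [h, mul_nonneg hx (sq_nonneg (y - z)), mul_nonneg hy (sq_nonneg (x - z)),
    mul_nonneg hz (sq_nonneg (x - y)), mul_nonneg (mul_nonneg hx hy) hz]

theorem Real.rpow_one_div_natCast_pow {x : ℝ} (hx : 0 ≤ x) {n : ℕ} (hn : n ≠ 0) :
    (x ^ ((1 : ℝ) / n)) ^ n = x := by
  rw [one_div]
  exact Real.rpow_inv_natCast_pow hx hn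

section Cover

variable {K1 K2 K3 K4 κ3 κ6 κ9 κ12 x1 x3 : ℝ}

theorem pEtaH_sub_eq :
    pEtaH K1 K2 K3 K4 κ3 κ6 κ9 κ12 x1 x3
        - ((K2 + K3) * κ3 * κ12 - (K1 + K4) * κ6 * κ9)
          * (K1 * K2 * K3 * κ3 * κ6 * κ12 * x1 ^ 2 * x3) =
      (K2 ^ 2 * K4 * κ3 ^ 2 * κ9 * (κ3 * κ12 - κ6 * κ9) * x1 ^ 4 * x3 ^ 2
          + K1 ^ 3 * K3 ^ 2 * κ6 ^ 3 * κ12 ^ 2)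
        + (K1 * K2 * K3 * κ3 * κ6 * κ12 * (κ3 * κ12 - κ6 * κ9) * x1 ^ 2 * x3 ^ 2
          + K1 ^ 2 * K2 * K3 * K4 * κ3 * κ6 ^ 2 * κ9 * κ12 * x1 ^ 2)
        + (K2 ^ 2 * K3 * κ3 ^ 2 * κ12 * (κ3 * κ12 - κ6 * κ9) * x1 ^ 3 * x3 ^ 2
          + K1 ^ 2 * K2 * K3 ^ 2 * κ3 * κ6 ^ 2 * κ12 ^ 2 * x1)
        + (K1 * K2 * K3 * K4 * κ3 ^ 2 * κ6 * κ9 * κ12 * x1 ^ 3 * x3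
          + K1 * K2 * K3 * K4 * κ3 ^ 2 * κ6 * κ9 * κ12 * x1 ^ 3 * x3
          + K1 ^ 2 * K3 ^ 2 * κ6 ^ 3 * κ12 ^ 2 * x3)
        + (K1 * K2 ^ 2 * K4 * κ3 ^ 2 * κ6 * κ9 ^ 2 * x1 ^ 4 * x3
          + K1 ^ 2 * K2 * K3 * κ3 * κ6 ^ 2 * κ12 ^ 2 * x1 * x3
          + K1 ^ 2 * K2 * K3 * κ3 * κ6 ^ 2 * κ12 ^ 2 * x1 * x3) := by
  unfold pEtaH
  ring

theorem mul_le_pEtaH_sub_of_circuits {r s t u v : ℝ}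
    (hK1 : 0 < K1) (hK2 : 0 < K2) (hK3 : 0 < K3) (hK4 : 0 < K4)
    (hκ3 : 0 < κ3) (hκ6 : 0 < κ6) (hκ9 : 0 < κ9) (hκ12 : 0 < κ12)
    (ha : 0 ≤ κ3 * κ12 - κ6 * κ9) (hx1 : 0 ≤ x1) (hx3 : 0 ≤ x3)
    (hr : r ^ 2 = K1 * K4 * κ6 * κ9 * (κ3 * κ12 - κ6 * κ9))
    (hs : s ^ 2 = K2 * K3 * κ3 * κ12 * (κ3 * κ12 - κ6 * κ9))
    (ht : t ^ 3 = K1 * K2 * K3 * K4 * κ3 * κ6 ^ 2 * κ9 ^ 2 * κ12)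
    (hu : u ^ 3 = K2 * K4) (hv : v ^ 3 = K1 * K3) :
    (4 * r + 2 * s + 3 * t * (K2⁻¹ * u + K3⁻¹ * v))
        * (K1 * K2 * K3 * κ3 * κ6 * κ12 * x1 ^ 2 * x3) ≤
      pEtaH K1 K2 K3 K4 κ3 κ6 κ9 κ12 x1 x3
        - ((K2 + K3) * κ3 * κ12 - (K1 + K4) * κ6 * κ9)
          * (K1 * K2 * K3 * κ3 * κ6 * κ12 * x1 ^ 2 * x3) := by
  set D := K1 * K2 * K3 * κ3 * κ6 * κ12 * x1 ^ 2 * x3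
  have circuit1 : 2 * (r * D) ≤
      K2 ^ 2 * K4 * κ3 ^ 2 * κ9 * (κ3 * κ12 - κ6 * κ9) * x1 ^ 4 * x3 ^ 2
        + K1 ^ 3 * K3 ^ 2 * κ6 ^ 3 * κ12 ^ 2 :=
    two_mul_le_add_of_sq_le_mul (by positivity) (by positivity)
      (le_of_eq (by linear_combination D ^ 2 * hr))
  have circuit2 : 2 * (r * D) ≤
      K1 * K2 * K3 * κ3 * κ6 * κ12 * (κ3 * κ12 - κ6 * κ9) * x1 ^ 2 * x3 ^ 2
        + K1 ^ 2 * K2 * K3 * K4 * κ3 * κ6 ^ 2 * κ9 * κ12 * x1 ^ 2 :=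
    two_mul_le_add_of_sq_le_mul (by positivity) (by positivity)
      (le_of_eq (by linear_combination D ^ 2 * hr))
  have circuit3 : 2 * (s * D) ≤
      K2 ^ 2 * K3 * κ3 ^ 2 * κ12 * (κ3 * κ12 - κ6 * κ9) * x1 ^ 3 * x3 ^ 2
        + K1 ^ 2 * K2 * K3 ^ 2 * κ3 * κ6 ^ 2 * κ12 ^ 2 * x1 :=
    two_mul_le_add_of_sq_le_mul (by positivity) (by positivity)
      (le_of_eq (by linear_combination D ^ 2 * hs))
  have circuit4 : 3 * (t * u * (D / K2)) ≤
      K1 * K2 * K3 * K4 * κ3 ^ 2 * κ6 * κ9 * κ12 * x1 ^ 3 * x3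
        + K1 * K2 * K3 * K4 * κ3 ^ 2 * κ6 * κ9 * κ12 * x1 ^ 3 * x3
        + K1 ^ 2 * K3 ^ 2 * κ6 ^ 3 * κ12 ^ 2 * x3 := by
    refine three_mul_le_add_add_of_pow_three_le_mul (by positivity) (by positivity)
      (by positivity) (le_of_eq ?_)
    rw [mul_pow, mul_pow, ht, hu]
    field_simp
    ring
  have circuit5 : 3 * (t * v * (D / K3)) ≤
      K1 * K2 ^ 2 * K4 * κ3 ^ 2 * κ6 * κ9 ^ 2 * x1 ^ 4 * x3
        + K1 ^ 2 * K2 * K3 * κ3 * κ6 ^ 2 * κ12 ^ 2 * x1 * x3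
        + K1 ^ 2 * K2 * K3 * κ3 * κ6 ^ 2 * κ12 ^ 2 * x1 * x3 := by
    refine three_mul_le_add_add_of_pow_three_le_mul (by positivity) (by positivity)
      (by positivity) (le_of_eq ?_)
    rw [mul_pow, mul_pow, ht, hv]
    field_simp
    ring
  have expand : (4 * r + 2 * s + 3 * t * (K2⁻¹ * u + K3⁻¹ * v)) * D =
      2 * (r * D) + 2 * (r * D) + 2 * (s * D)
        + 3 * (t * u * (D / K2)) + 3 * (t * v * (D / K3)) := by
    ring
  rw [pEtaH_sub_eq, expand]
  linarith

end Cover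

theorem pEtaH_nonneg_of_cover15_general
    (K1 K2 K3 K4 κ3 κ6 κ9 κ12 : ℝ)
    (hK1 : 0 < K1) (hK2 : 0 < K2) (hK3 : 0 < K3) (hK4 : 0 < K4)
    (hκ3 : 0 < κ3) (hκ6 : 0 < κ6) (hκ9 : 0 < κ9) (hκ12 : 0 < κ12)
    (ha : 0 < κ3 * κ12 - κ6 * κ9)
    (hcond : -((K2 + K3) * κ3 * κ12 - (K1 + K4) * κ6 * κ9) ≤
      4 * (K1 * K4 * κ6 * κ9 * (κ3 * κ12 - κ6 * κ9)) ^ ((1 : ℝ) / 2)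
        + 2 * (K2 * K3 * κ3 * κ12 * (κ3 * κ12 - κ6 * κ9)) ^ ((1 : ℝ) / 2)
        + 3 * (K1 * K2 * K3 * K4 * κ3 * κ6 ^ 2 * κ9 ^ 2 * κ12) ^ ((1 : ℝ) / 3)
            * (K2⁻¹ * (K2 * K4) ^ ((1 : ℝ) / 3) + K3⁻¹ * (K1 * K3) ^ ((1 : ℝ) / 3))) :
    ∀ x1 x3 : ℝ, 0 < x1 → 0 < x3 → 0 ≤ pEtaH K1 K2 K3 K4 κ3 κ6 κ9 κ12 x1 x3 := by
  intro x1 x3 hx1 hx3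
  have hD : 0 ≤ K1 * K2 * K3 * κ3 * κ6 * κ12 * x1 ^ 2 * x3 := by positivity
  have hcover := mul_le_pEtaH_sub_of_circuits hK1 hK2 hK3 hK4 hκ3 hκ6 hκ9 hκ12 ha.le
    hx1.le hx3.le
    (Real.rpow_one_div_natCast_pow (n := 2) (by positivity) two_ne_zero)
    (Real.rpow_one_div_natCast_pow (n := 2) (by positivity) two_ne_zero)
    (Real.rpow_one_div_natCast_pow (n := 3) (by positivity) three_ne_zero)
    (Real.rpow_one_div_natCast_pow (n := 3) (by positivity) three_ne_zero)
    (Real.rpow_one_div_natCast_pow (n := 3) (by positivity) three_ne_zero)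
  linarith [mul_le_mul_of_nonneg_right hcond hD]

/-- Sufficient condition for nonnegativity of `p_{η,H}` on the positive
orthant coming from the pure cover. -/
theorem pEtaH_nonneg_of_cover15
    (K1 K2 K3 K4 κ3 κ6 κ9 κ12 : ℝ)
    (hK1 : 0 < K1) (hK2 : 0 < K2) (hK3 : 0 < K3) (hK4 : 0 < K4)
    (hκ3 : 0 < κ3) (hκ6 : 0 < κ6) (hκ9 : 0 < κ9) (hκ12 : 0 < κ12)
    (ha : 0 < κ3 * κ12 - κ6 * κ9)
    (hb : (K2 + K3) * κ3 * κ12 - (K1 + K4) * κ6 * κ9 < 0)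
    (hcond : -((K2 + K3) * κ3 * κ12 - (K1 + K4) * κ6 * κ9) ≤
      4 * (K1 * K4 * κ6 * κ9 * (κ3 * κ12 - κ6 * κ9)) ^ ((1 : ℝ) / 2)
        + 2 * (K2 * K3 * κ3 * κ12 * (κ3 * κ12 - κ6 * κ9)) ^ ((1 : ℝ) / 2)
        + 3 * (K1 * K2 * K3 * K4 * κ3 * κ6 ^ 2 * κ9 ^ 2 * κ12) ^ ((1 : ℝ) / 3)
            * (K2⁻¹ * (K2 * K4) ^ ((1 : ℝ) / 3) + K3⁻¹ * (K1 * K3) ^ ((1 : ℝ) / 3))) :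
    ∀ x1 x3 : ℝ, 0 < x1 → 0 < x3 → 0 ≤ pEtaH K1 K2 K3 K4 κ3 κ6 κ9 κ12 x1 x3 :=
  pEtaH_nonneg_of_cover15_general K1 K2 K3 K4 κ3 κ6 κ9 κ12 hK1 hK2 hK3 hK4 hκ3 hκ6 hκ9 hκ12 ha hcond
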